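/- arXiv:1404.0628 — 2 statements merged into one kernel-verified Lean document; each statement's English description precedes it below -/
import Mathlib

section
/- Let R be a ring and n ≥ 0. For every staircase chain map x from an (n+2)-complex C to a 2-complex X of R-modules, the family G_n(C, x) is an (n+3)-complex: the composite of any n+3 consecutive differentials of G_n(C, x) is zero. -/
/-- A ℤ-indexed family of `R`-modules together with degree `+1` linear maps
(the common underlying datum of `N`-complexes for all `N`). -/
structure ZSys (R : Type) [Ring R] where
  X : ℤ → Type
  [gr : ∀ i, AddCommGroup (X i)]
  [mo : ∀ i, Module R (X i)]
  d : ∀ i : ℤ, X i →ₗ[R] X (i + 1)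

attribute [instance] ZSys.gr ZSys.mo

variable {R : Type} [Ring R]

/-- Transport along an equality of degrees. -/
def ZSys.cast (W : ZSys R) {i j : ℤ} (h : i = j) : W.X i →ₗ[R] W.X j := by
  subst h; exact LinearMap.id

/-- The composite of `k` consecutive differentials, `W.X i →ₗ W.X (i + k)`. -/
def ZSys.dpow (W : ZSys R) : (k : ℕ) → (i : ℤ) → (W.X i →ₗ[R] W.X (i + (k : ℤ)))
  | 0, i => W.cast (by simp)
  | k + 1, i => W.cast (by push_cast; ring) ∘ₗ W.dpow k (i + 1) ∘ₗ W.d i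

/-- `W` is an `N`-complex: the composite of any `N` consecutive differentials is zero. -/
def IsNComplex (N : ℕ) (W : ZSys R) : Prop := ∀ i : ℤ, W.dpow N i = 0

/-- A morphism of such systems (in particular, of `N`-complexes): a family of linear maps
commuting with the differentials. -/
def IsChainMap (V W : ZSys R) (f : ∀ i : ℤ, V.X i →ₗ[R] W.X i) : Prop :=
  ∀ i : ℤ, W.d i ∘ₗ f i = f (i + 1) ∘ₗ V.d i

/-- `h` is a homotopy from `f` to `g` (morphisms of `N`-complexes `V → W`):
`g - f = Σ_{j=1}^{N} d^{N-j} ∘ h ∘ d^{j-1}` in every degree. -/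
def IsHomotopy (N : ℕ) (V W : ZSys R) (f g : ∀ i : ℤ, V.X i →ₗ[R] W.X i)
    (h : ∀ i : ℤ, V.X (i + (N : ℤ) - 1) →ₗ[R] W.X i) : Prop :=
  ∀ i : ℤ, g i - f i =
    ∑ j : Fin N,
      W.cast (show (i + ((j : ℕ) : ℤ) - (N : ℤ) + 1) + ((N - 1 - (j : ℕ) : ℕ) : ℤ) = i by
          have hj := j.isLt; omega) ∘ₗ
        W.dpow (N - 1 - (j : ℕ)) (i + ((j : ℕ) : ℤ) - (N : ℤ) + 1) ∘ₗ
        h (i + ((j : ℕ) : ℤ) - (N : ℤ) + 1) ∘ₗ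
        V.cast (show i + ((j : ℕ) : ℤ) = (i + ((j : ℕ) : ℤ) - (N : ℤ) + 1) + (N : ℤ) - 1 by
          ring) ∘ₗ
        V.dpow (j : ℕ) i

/-- Homotopy equivalence of `N`-complexes `W` and `V`: morphisms `f : W → V` and
`g : V → W` with `g ∘ f` homotopic to `id_W` and `f ∘ g` homotopic to `id_V`. -/
def HomotopyEquivN (N : ℕ) (W V : ZSys R) : Prop :=
  ∃ (f : ∀ i : ℤ, W.X i →ₗ[R] V.X i) (g : ∀ i : ℤ, V.X i →ₗ[R] W.X i),
    IsChainMap W V f ∧ IsChainMap V W g ∧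
    (∃ h, IsHomotopy N W W (fun i => g i ∘ₗ f i) (fun _ => LinearMap.id) h) ∧
    (∃ h, IsHomotopy N V V (fun i => f i ∘ₗ g i) (fun _ => LinearMap.id) h)
section DivModLemmas

private theorem div_succ_of_lt {i m : ℤ} (hm : 0 < m) (h : i % m + 1 < m) :
    (i + 1) / m = i / m := by
  have h0 : 0 ≤ i % m := Int.emod_nonneg i (by omega)
  have key : i + 1 = (i % m + 1) + m * (i / m) := by
    have := Int.emod_add_mul_ediv i m; linarith
  rw [key, Int.add_mul_ediv_left _ _ (show m ≠ 0 by omega),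
    Int.ediv_eq_zero_of_lt (by omega) h, zero_add]

private theorem mod_succ_of_lt {i m : ℤ} (hm : 0 < m) (h : i % m + 1 < m) :
    (i + 1) % m = i % m + 1 := by
  have h0 : 0 ≤ i % m := Int.emod_nonneg i (by omega)
  have key : i + 1 = (i % m + 1) + m * (i / m) := by
    have := Int.emod_add_mul_ediv i m; linarith
  rw [key, Int.add_mul_emod_self_left, Int.emod_eq_of_lt (by omega) h]

private theorem div_succ_of_eq {i m : ℤ} (hm : 0 < m) (h : i % m = m - 1) :
    (i + 1) / m = i / m + 1 := by
  have key : i + 1 = m * (i / m + 1) := by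
    have := Int.emod_add_mul_ediv i m; ring_nf; ring_nf at this; linarith
  rw [key, Int.mul_ediv_cancel_left _ (show m ≠ 0 by omega)]

private theorem mod_succ_of_eq {i m : ℤ} (hm : 0 < m) (h : i % m = m - 1) :
    (i + 1) % m = 0 := by
  have key : i + 1 = m * (i / m + 1) := by
    have := Int.emod_add_mul_ediv i m; ring_nf; ring_nf at this; linarith
  rw [key, Int.mul_emod_right]

private theorem emod_bounds {i m : ℤ} (hm : 0 < m) : 0 ≤ i % m ∧ i % m < m :=
  ⟨Int.emod_nonneg i (by omega), Int.emod_lt_of_pos i hm⟩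

end DivModLemmas

/-- A staircase chain map from an `(n+2)`-complex `C` to a `2`-complex `X`: maps
`x_{2m} : C^{m(n+2)} → X^{2m}` and `x_{2m+1} : C^{m(n+2)+n+1} → X^{2m+1}` with
`d ∘ x_{2m} = x_{2m+1} ∘ d^{n+1}` and `d ∘ x_{2m+1} = x_{2m+2} ∘ d`. -/
structure Staircase (R : Type) [Ring R] (n : ℕ) (C Xc : ZSys R) where
  xe : ∀ m : ℤ, C.X (m * ((n : ℤ) + 2)) →ₗ[R] Xc.X (2 * m)
  xo : ∀ m : ℤ, C.X (m * ((n : ℤ) + 2) + (n : ℤ) + 1) →ₗ[R] Xc.X (2 * m + 1)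
  comm_e : ∀ m : ℤ,
    Xc.d (2 * m) ∘ₗ xe m
      = xo m ∘ₗ C.cast (show m * ((n : ℤ) + 2) + ((n + 1 : ℕ) : ℤ)
            = m * ((n : ℤ) + 2) + (n : ℤ) + 1 by push_cast; ring)
          ∘ₗ C.dpow (n + 1) (m * ((n : ℤ) + 2))
  comm_o : ∀ m : ℤ,
    Xc.cast (show 2 * m + 1 + 1 = 2 * (m + 1) by ring) ∘ₗ Xc.d (2 * m + 1) ∘ₗ xo m
      = xe (m + 1) ∘ₗ C.cast (show m * ((n : ℤ) + 2) + (n : ℤ) + 1 + 1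
            = (m + 1) * ((n : ℤ) + 2) by ring)
          ∘ₗ C.d (m * ((n : ℤ) + 2) + (n : ℤ) + 1)

/-- The family `G_n(C, x)` associated with a staircase chain map `x` from an
`(n+2)`-complex `C` to a `2`-complex `X`. Writing `i = q(n+3) + r` with `0 ≤ r ≤ n+2`,
its degree-`i` object is `C^{q(n+2)+r} ⊕ X^{2q}` for `0 ≤ r ≤ n+1` and
`C^{(q+1)(n+2)} ⊕ X^{2q+1}` for `r = n+2` (note `q(n+2)+r = i - q` in all cases); its
differentials are `[[d,0],[0,1]]` (for `0 ≤ r ≤ n`), `[[−d,0],[x_{2q+1},d]]`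
(for `r = n+1`) and `[[−1,0],[x_{2q+2},d]]` (for `r = n+2`). -/
def Gsys (R : Type) [Ring R] (n : ℕ) (C Xc : ZSys R) (x : Staircase R n C Xc) : ZSys R where
  X i := C.X (i - i / ((n : ℤ) + 3)) ×
    Xc.X (if i % ((n : ℤ) + 3) = (n : ℤ) + 2 then 2 * (i / ((n : ℤ) + 3)) + 1
      else 2 * (i / ((n : ℤ) + 3)))
  gr i := by infer_instance
  mo i := by infer_instance
  d i :=
    if hA : i % ((n : ℤ) + 3) ≤ (n : ℤ) then
      -- `[[d, 0], [0, 1]]`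
      LinearMap.prod
        (C.cast (show i - i / ((n : ℤ) + 3) + 1 = (i + 1) - (i + 1) / ((n : ℤ) + 3) by
            rw [div_succ_of_lt (by positivity) (by linarith)]; ring)
          ∘ₗ C.d (i - i / ((n : ℤ) + 3)) ∘ₗ LinearMap.fst R _ _)
        (Xc.cast (show (if i % ((n : ℤ) + 3) = (n : ℤ) + 2 then 2 * (i / ((n : ℤ) + 3)) + 1
              else 2 * (i / ((n : ℤ) + 3)))
            = (if (i + 1) % ((n : ℤ) + 3) = (n : ℤ) + 2 then 2 * ((i + 1) / ((n : ℤ) + 3)) + 1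
              else 2 * ((i + 1) / ((n : ℤ) + 3))) by
            rw [if_neg (by intro hc; rw [hc] at hA; linarith),
              if_neg (by rw [mod_succ_of_lt (by positivity) (by linarith)]; intro hc; linarith),
              div_succ_of_lt (by positivity) (by linarith)])
          ∘ₗ LinearMap.snd R _ _)
    else if hB : i % ((n : ℤ) + 3) = (n : ℤ) + 1 then
      -- `[[−d, 0], [x_{2q+1}, d]]`
      LinearMap.prod
        (-(C.cast (show i - i / ((n : ℤ) + 3) + 1 = (i + 1) - (i + 1) / ((n : ℤ) + 3) by
            rw [div_succ_of_lt (by positivity) (by rw [hB]; linarith)]; ring)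
          ∘ₗ C.d (i - i / ((n : ℤ) + 3)) ∘ₗ LinearMap.fst R _ _))
        (Xc.cast (show 2 * (i / ((n : ℤ) + 3)) + 1
            = (if (i + 1) % ((n : ℤ) + 3) = (n : ℤ) + 2 then 2 * ((i + 1) / ((n : ℤ) + 3)) + 1
              else 2 * ((i + 1) / ((n : ℤ) + 3))) by
            rw [if_pos (by rw [mod_succ_of_lt (by positivity) (by rw [hB]; linarith), hB]; ring),
              div_succ_of_lt (by positivity) (by rw [hB]; linarith)])
          ∘ₗ x.xo (i / ((n : ℤ) + 3))
          ∘ₗ C.cast (show i - i / ((n : ℤ) + 3)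
              = (i / ((n : ℤ) + 3)) * ((n : ℤ) + 2) + (n : ℤ) + 1 by
              linear_combination (-1 : ℤ) * Int.mul_ediv_add_emod i ((n : ℤ) + 3) + hB)
          ∘ₗ LinearMap.fst R _ _
        + Xc.cast (show 2 * (i / ((n : ℤ) + 3)) + 1
            = (if (i + 1) % ((n : ℤ) + 3) = (n : ℤ) + 2 then 2 * ((i + 1) / ((n : ℤ) + 3)) + 1
              else 2 * ((i + 1) / ((n : ℤ) + 3))) by
            rw [if_pos (by rw [mod_succ_of_lt (by positivity) (by rw [hB]; linarith), hB]; ring),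
              div_succ_of_lt (by positivity) (by rw [hB]; linarith)])
          ∘ₗ Xc.d (2 * (i / ((n : ℤ) + 3)))
          ∘ₗ Xc.cast (show (if i % ((n : ℤ) + 3) = (n : ℤ) + 2 then 2 * (i / ((n : ℤ) + 3)) + 1
                else 2 * (i / ((n : ℤ) + 3))) = 2 * (i / ((n : ℤ) + 3)) by
              rw [if_neg (by rw [hB]; intro hc; linarith)])
          ∘ₗ LinearMap.snd R _ _)
    else
      -- `[[−1, 0], [x_{2q+2}, d]]`; here `i % (n+3) = n+2`.
      have hC2 : i % ((n : ℤ) + 3) = (n : ℤ) + 2 := by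
        rcases emod_bounds (show (0 : ℤ) < (n : ℤ) + 3 by positivity) (i := i) with ⟨hb1, hb2⟩
        push_neg at hA
        rcases lt_or_eq_of_le (show (n : ℤ) + 1 ≤ i % ((n : ℤ) + 3) by linarith) with hlt | heq
        · linarith
        · exact absurd heq.symm hB
      have hmod1 : (i + 1) % ((n : ℤ) + 3) = 0 :=
        mod_succ_of_eq (by positivity) (by rw [hC2]; ring)
      have hdiv1 : (i + 1) / ((n : ℤ) + 3) = i / ((n : ℤ) + 3) + 1 :=
        div_succ_of_eq (by positivity) (by rw [hC2]; ring)
      have hneq : ¬((i + 1) % ((n : ℤ) + 3) = (n : ℤ) + 2) := by rw [hmod1]; omega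
      LinearMap.prod
        (-(C.cast (show i - i / ((n : ℤ) + 3) = (i + 1) - (i + 1) / ((n : ℤ) + 3) by
            rw [hdiv1]; ring)
          ∘ₗ LinearMap.fst R _ _))
        (Xc.cast (show 2 * (i / ((n : ℤ) + 3) + 1)
            = (if (i + 1) % ((n : ℤ) + 3) = (n : ℤ) + 2 then 2 * ((i + 1) / ((n : ℤ) + 3)) + 1
              else 2 * ((i + 1) / ((n : ℤ) + 3))) by
            rw [if_neg hneq, hdiv1])
          ∘ₗ x.xe (i / ((n : ℤ) + 3) + 1)
          ∘ₗ C.cast (show i - i / ((n : ℤ) + 3)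
              = (i / ((n : ℤ) + 3) + 1) * ((n : ℤ) + 2) by
              linear_combination (-1 : ℤ) * Int.mul_ediv_add_emod i ((n : ℤ) + 3) + hC2)
          ∘ₗ LinearMap.fst R _ _
        + Xc.cast (show 2 * (i / ((n : ℤ) + 3)) + 1 + 1
            = (if (i + 1) % ((n : ℤ) + 3) = (n : ℤ) + 2 then 2 * ((i + 1) / ((n : ℤ) + 3)) + 1
              else 2 * ((i + 1) / ((n : ℤ) + 3))) by
            rw [if_neg hneq, hdiv1]; ring)
          ∘ₗ Xc.d (2 * (i / ((n : ℤ) + 3)) + 1)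
          ∘ₗ Xc.cast (show (if i % ((n : ℤ) + 3) = (n : ℤ) + 2 then 2 * (i / ((n : ℤ) + 3)) + 1
                else 2 * (i / ((n : ℤ) + 3))) = 2 * (i / ((n : ℤ) + 3)) + 1 by
              rw [if_pos hC2])
          ∘ₗ LinearMap.snd R _ _)

/-!
Reading `G_n(C, x)` in periods of `n + 3` degrees, each period consists of `n + 1` maps
`d ⊕ 1`, followed by the two maps `[[−d, 0], [x, d]]` and `[[−1, 0], [x, d]]` that cross
into the next period. Any `n + 3` consecutive differentials cover exactly one period. On
the `C`-component they compose to `± d^{n+2} = 0`. On the `X`-component, the two crossing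
maps contribute `x ∘ d^{n+1}` and `d ∘ x` with opposite signs, which cancel because `x` is a
staircase chain map, together with `d ∘ d = 0` in `X`.
-/

namespace ZSys

variable (W : ZSys R)

theorem cast_rfl {i : ℤ} (h : i = i) (a : W.X i) : W.cast h a = a := rfl

theorem cast_cast {i j k : ℤ} (h : i = j) (h' : j = k) (a : W.X i) :
    W.cast h' (W.cast h a) = W.cast (h.trans h') a := by
  subst h h'; rfl

theorem cast_eq_iff {i j : ℤ} (h : i = j) (a : W.X i) (b : W.X j) :
    W.cast h a = b ↔ a = W.cast h.symm b := by
  subst h; rfl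

theorem cast_eq_zero_iff {i j : ℤ} (h : i = j) (a : W.X i) : W.cast h a = 0 ↔ a = 0 := by
  subst h; rfl

theorem d_cast {i j : ℤ} (h : i = j) (a : W.X i) :
    W.d j (W.cast h a) = W.cast (by rw [h]) (W.d i a) := by
  subst h; rfl

theorem dpow_cast (k : ℕ) {i j : ℤ} (h : i = j) (a : W.X i) :
    W.dpow k j (W.cast h a) = W.cast (by rw [h]) (W.dpow k i a) := by
  subst h; rfl

theorem dpow_zero_apply (i : ℤ) (a : W.X i) : W.dpow 0 i a = W.cast (by simp) a := rfl

theorem dpow_succ_apply (k : ℕ) (i : ℤ) (a : W.X i) :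
    W.dpow (k + 1) i a = W.cast (by push_cast; ring) (W.dpow k (i + 1) (W.d i a)) := rfl

theorem dpow_d_apply (k : ℕ) (i : ℤ) (a : W.X i) :
    W.dpow k (i + 1) (W.d i a) = W.cast (by push_cast; ring) (W.dpow (k + 1) i a) := by
  rw [dpow_succ_apply, cast_cast, cast_rfl]

theorem dpow_succ_apply' (k : ℕ) (i : ℤ) (a : W.X i) :
    W.dpow (k + 1) i a = W.cast (by push_cast; ring) (W.d (i + k) (W.dpow k i a)) := by
  induction k generalizing i a with
  | zero => rw [dpow_succ_apply, dpow_zero_apply, dpow_zero_apply, d_cast, cast_cast, cast_cast]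
  | succ k ih => rw [dpow_succ_apply, ih, cast_cast, dpow_d_apply, d_cast, cast_cast]

theorem d_dpow_apply (k : ℕ) (i : ℤ) (a : W.X i) :
    W.d (i + k) (W.dpow k i a) = W.cast (by push_cast; ring) (W.dpow (k + 1) i a) := by
  rw [dpow_succ_apply', cast_cast, cast_rfl]

theorem dpow_add_apply (k l : ℕ) (i : ℤ) (a : W.X i) :
    W.dpow (k + l) i a = W.cast (by push_cast; ring) (W.dpow l (i + k) (W.dpow k i a)) := by
  induction l generalizing i a with
  | zero => rw [dpow_zero_apply, cast_cast]; rfl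
  | succ l ih =>
    show W.dpow (k + l + 1) i a = _
    rw [dpow_succ_apply', ih, d_cast, cast_cast, dpow_succ_apply' _ l, cast_cast]

theorem dpow_dpow_apply (k l : ℕ) (i : ℤ) (a : W.X i) :
    W.dpow l (i + k) (W.dpow k i a) = W.cast (by push_cast; ring) (W.dpow (k + l) i a) := by
  rw [dpow_add_apply W k l, cast_cast, cast_rfl]

theorem dpow_succ_apply_eq_zero_iff (k : ℕ) (i : ℤ) (a : W.X i) :
    W.dpow (k + 1) i a = 0 ↔ W.dpow k (i + 1) (W.d i a) = 0 := by
  rw [dpow_succ_apply, cast_eq_zero_iff]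

variable {W}

theorem d_d_apply_of_isNComplex_two (hW : IsNComplex 2 W) (i : ℤ) (a : W.X i) :
    W.d (i + 1) (W.d i a) = 0 := by
  have h : W.dpow (0 + 1 + 1) i a = 0 := DFunLike.congr_fun (hW i) a
  rwa [dpow_succ_apply, dpow_succ_apply, dpow_zero_apply, cast_cast, cast_cast,
    cast_eq_zero_iff] at h

end ZSys

theorem emod_add_of_emod_add_lt {i m k : ℤ} (hm : 0 < m) (hk : 0 ≤ k) (h : i % m + k < m) :
    (i + k) % m = i % m + k := by
  have hi : i + k = (i % m + k) + m * (i / m) := by linarith [Int.emod_add_mul_ediv i m]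
  rw [hi, Int.add_mul_emod_self_left,
    Int.emod_eq_of_lt (add_nonneg (Int.emod_nonneg i hm.ne') hk) h]

theorem ediv_add_of_emod_add_lt {i m k : ℤ} (hm : 0 < m) (hk : 0 ≤ k) (h : i % m + k < m) :
    (i + k) / m = i / m := by
  have hi : i + k = (i % m + k) + m * (i / m) := by linarith [Int.emod_add_mul_ediv i m]
  rw [hi, Int.add_mul_ediv_left _ _ hm.ne',
    Int.ediv_eq_zero_of_lt (add_nonneg (Int.emod_nonneg i hm.ne') hk) h, zero_add]

namespace Staircase

variable {n : ℕ} {C Xc : ZSys R} (x : Staircase R n C Xc)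

theorem d_xe_apply (m : ℤ) (c : C.X (m * ((n : ℤ) + 2))) :
    Xc.d (2 * m) (x.xe m c)
      = x.xo m (C.cast (by push_cast; ring) (C.dpow (n + 1) (m * ((n : ℤ) + 2)) c)) :=
  DFunLike.congr_fun (x.comm_e m) c

theorem d_xo_apply (m : ℤ) (c : C.X (m * ((n : ℤ) + 2) + n + 1)) :
    Xc.d (2 * m + 1) (x.xo m c)
      = Xc.cast (by ring) (x.xe (m + 1) (C.cast (by ring) (C.d (m * ((n : ℤ) + 2) + n + 1) c))) :=
  (Xc.cast_eq_iff _ _ _).mp (DFunLike.congr_fun (x.comm_o m) c)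

end Staircase

section Gsys

variable {n : ℕ} {C Xc : ZSys R} (x : Staircase R n C Xc)

theorem Gsys_cast_apply {i j : ℤ} (h : i = j) (a : C.X (i - i / ((n : ℤ) + 3)))
    (b : Xc.X (if i % ((n : ℤ) + 3) = n + 2 then 2 * (i / ((n : ℤ) + 3)) + 1
      else 2 * (i / ((n : ℤ) + 3)))) :
    (Gsys R n C Xc x).cast h (a, b) = (C.cast (by rw [h]) a, Xc.cast (by rw [h]) b) := by
  subst h; rfl

/- The block index `q` is a parameter, rather than `i / (n + 3)`, so that the formulas for
consecutive differentials within one period can be chained by rewriting. -/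
theorem Gsys_d_apply_of_emod_le {i : ℤ} (q : ℤ) (hq : i / ((n : ℤ) + 3) = q)
    (hi : i % ((n : ℤ) + 3) ≤ n) (a : C.X (i - i / ((n : ℤ) + 3)))
    (b : Xc.X (if i % ((n : ℤ) + 3) = n + 2 then 2 * (i / ((n : ℤ) + 3)) + 1
      else 2 * (i / ((n : ℤ) + 3)))) :
    (Gsys R n C Xc x).d i (a, b)
      = (C.cast (by rw [div_succ_of_lt (by positivity) (by linarith), hq]; ring)
          (C.d (i - q) (C.cast (by rw [hq]) a)),
        Xc.cast (by
            rw [if_neg (fun h => by rw [h] at hi; linarith),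
              if_neg (fun h => by rw [mod_succ_of_lt (by positivity) (by linarith)] at h; linarith),
              div_succ_of_lt (by positivity) (by linarith)])
          b) := by
  subst hq
  simp only [Gsys]
  rw [dif_pos hi]
  rfl

theorem Gsys_d_apply_of_emod_eq_add_one {i : ℤ} (q : ℤ) (hq : i / ((n : ℤ) + 3) = q)
    (hi : i % ((n : ℤ) + 3) = n + 1) (a : C.X (i - i / ((n : ℤ) + 3)))
    (b : Xc.X (if i % ((n : ℤ) + 3) = n + 2 then 2 * (i / ((n : ℤ) + 3)) + 1
      else 2 * (i / ((n : ℤ) + 3)))) :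
    (Gsys R n C Xc x).d i (a, b)
      = (-C.cast (by rw [div_succ_of_lt (by positivity) (by rw [hi]; linarith), hq]; ring)
          (C.d (i - q) (C.cast (by rw [hq]) a)),
        Xc.cast (by
            rw [if_pos (by rw [mod_succ_of_lt (by positivity) (by rw [hi]; linarith), hi]; ring),
              div_succ_of_lt (by positivity) (by rw [hi]; linarith), hq])
          (x.xo q (C.cast (by
            linear_combination (-1 : ℤ) * Int.mul_ediv_add_emod i ((n : ℤ) + 3) + hi
              + ((n : ℤ) + 2) * hq) a))
        + Xc.cast (by
            rw [if_pos (by rw [mod_succ_of_lt (by positivity) (by rw [hi]; linarith), hi]; ring),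
              div_succ_of_lt (by positivity) (by rw [hi]; linarith), hq])
          (Xc.d (2 * q)
            (Xc.cast (by rw [if_neg (fun h => by rw [hi] at h; linarith), hq]) b))) := by
  subst hq
  simp only [Gsys]
  rw [dif_neg (fun h => by rw [hi] at h; linarith), dif_pos hi]
  rfl

theorem Gsys_d_apply_of_emod_eq_add_two {i : ℤ} (q : ℤ) (hq : i / ((n : ℤ) + 3) = q)
    (hi : i % ((n : ℤ) + 3) = n + 2) (a : C.X (i - i / ((n : ℤ) + 3)))
    (b : Xc.X (if i % ((n : ℤ) + 3) = n + 2 then 2 * (i / ((n : ℤ) + 3)) + 1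
      else 2 * (i / ((n : ℤ) + 3)))) :
    (Gsys R n C Xc x).d i (a, b)
      = (-C.cast (by rw [div_succ_of_eq (by positivity) (by rw [hi]; ring)]; ring) a,
        Xc.cast (by
            rw [if_neg (by rw [mod_succ_of_eq (by positivity) (by rw [hi]; ring)]; omega),
              div_succ_of_eq (by positivity) (by rw [hi]; ring), hq])
          (x.xe (q + 1) (C.cast (by
            linear_combination (-1 : ℤ) * Int.mul_ediv_add_emod i ((n : ℤ) + 3) + hi
              + ((n : ℤ) + 2) * hq) a))
        + Xc.cast (by
            rw [if_neg (by rw [mod_succ_of_eq (by positivity) (by rw [hi]; ring)]; omega),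
              div_succ_of_eq (by positivity) (by rw [hi]; ring), hq]; ring)
          (Xc.d (2 * q + 1) (Xc.cast (by rw [if_pos hi, hq]) b))) := by
  subst hq
  simp only [Gsys]
  rw [dif_neg (fun h => by rw [hi] at h; linarith), dif_neg (fun h => by rw [hi] at h; linarith)]
  rfl

theorem Gsys_dpow_apply_of_emod_add_le (k : ℕ) {i : ℤ} (hk : i % ((n : ℤ) + 3) + k ≤ n + 1)
    (a : C.X (i - i / ((n : ℤ) + 3)))
    (b : Xc.X (if i % ((n : ℤ) + 3) = n + 2 then 2 * (i / ((n : ℤ) + 3)) + 1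
      else 2 * (i / ((n : ℤ) + 3)))) :
    (Gsys R n C Xc x).dpow k i (a, b)
      = (C.cast (by
            rw [ediv_add_of_emod_add_lt (by positivity) (by positivity) (by linarith)]; ring)
          (C.dpow k (i - i / ((n : ℤ) + 3)) a),
        Xc.cast (by
            rw [if_neg (fun h => by rw [h] at hk; linarith),
              if_neg (fun h => by
                rw [emod_add_of_emod_add_lt (by positivity) (by positivity) (by linarith)] at h
                linarith),
              ediv_add_of_emod_add_lt (by positivity) (by positivity) (by linarith)])
          b) := by
  induction k generalizing i a b with
  | zero =>
    -- `erw`: the pair `(a, b)` has the product type, not syntactically `(Gsys R n C Xc x).X i`.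
    erw [ZSys.dpow_zero_apply (Gsys R n C Xc x)]
    simp only [ZSys.dpow_zero_apply, Gsys_cast_apply, ZSys.cast_cast]
    rfl
  | succ k ih =>
    have hi : i % ((n : ℤ) + 3) ≤ n := by push_cast at hk; linarith
    have hi' : (i + 1) % ((n : ℤ) + 3) = i % ((n : ℤ) + 3) + 1 :=
      mod_succ_of_lt (by positivity) (by linarith)
    erw [ZSys.dpow_succ_apply (Gsys R n C Xc x)]
    rw [Gsys_d_apply_of_emod_le x _ rfl hi, ih (by push_cast at hk; linarith), Gsys_cast_apply,
      ZSys.cast_cast, ZSys.cast_cast, ZSys.cast_rfl, ZSys.dpow_cast, ZSys.cast_cast,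
      ZSys.dpow_d_apply, ZSys.cast_cast, ZSys.cast_cast]

theorem Gsys_d_d_apply_of_emod_eq_add_one (hX : IsNComplex 2 Xc) {i : ℤ}
    (hi : i % ((n : ℤ) + 3) = n + 1) (a : C.X (i - i / ((n : ℤ) + 3)))
    (b : Xc.X (if i % ((n : ℤ) + 3) = n + 2 then 2 * (i / ((n : ℤ) + 3)) + 1
      else 2 * (i / ((n : ℤ) + 3)))) :
    (Gsys R n C Xc x).d (i + 1) ((Gsys R n C Xc x).d i (a, b))
      = (C.cast (by
          rw [div_succ_of_eq (by positivity)
              (by rw [mod_succ_of_lt (by positivity) (by omega)]; omega),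
            div_succ_of_lt (by positivity) (by omega)]; ring)
          (C.d (i - i / ((n : ℤ) + 3)) a), 0) := by
  have hi' : (i + 1) % ((n : ℤ) + 3) = n + 2 := by
    rw [mod_succ_of_lt (by positivity) (by omega), hi]; ring
  have hq' : (i + 1) / ((n : ℤ) + 3) = i / ((n : ℤ) + 3) :=
    div_succ_of_lt (by positivity) (by omega)
  rw [Gsys_d_apply_of_emod_eq_add_one x _ rfl hi, Gsys_d_apply_of_emod_eq_add_two x _ hq' hi']
  apply Prod.ext
  · simp only [map_neg, neg_neg, ZSys.cast_cast, ZSys.d_cast]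
  · simp only [map_add, map_neg, ZSys.cast_cast, ZSys.cast_rfl, ZSys.d_cast,
      x.d_xo_apply, ZSys.d_d_apply_of_isNComplex_two hX, map_zero, add_zero]
    abel

theorem Gsys_dpow_apply_eq_zero_of_emod_le (hC : IsNComplex (n + 2) C)
    (hX : IsNComplex 2 Xc) {i : ℤ} (hi : i % ((n : ℤ) + 3) ≤ n + 1)
    (a : C.X (i - i / ((n : ℤ) + 3)))
    (b : Xc.X (if i % ((n : ℤ) + 3) = n + 2 then 2 * (i / ((n : ℤ) + 3)) + 1
      else 2 * (i / ((n : ℤ) + 3)))) :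
    (Gsys R n C Xc x).dpow (n + 3) i (a, b) = 0 := by
  obtain ⟨r, hr⟩ : ∃ r : ℕ, (r : ℤ) = i % ((n : ℤ) + 3) :=
    ⟨_, Int.toNat_of_nonneg (Int.emod_nonneg _ (by positivity))⟩
  obtain ⟨k, hk⟩ : ∃ k : ℕ, k + r = n + 1 := ⟨n + 1 - r, by omega⟩
  have hik : (i + k) % ((n : ℤ) + 3) = n + 1 := by
    rw [emod_add_of_emod_add_lt (by positivity) (by positivity) (by omega)]; omega
  have hik' : (i + k + 1 + 1) % ((n : ℤ) + 3) = 0 :=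
    mod_succ_of_eq (by positivity) (by rw [mod_succ_of_lt (by positivity) (by omega)]; omega)
  erw [show n + 3 = k + (r + 1 + 1) by omega, ZSys.dpow_add_apply, ZSys.cast_eq_zero_iff,
    Gsys_dpow_apply_of_emod_add_le x k (by omega), ZSys.dpow_succ_apply_eq_zero_iff,
    ZSys.dpow_succ_apply_eq_zero_iff, Gsys_d_d_apply_of_emod_eq_add_one x hX hik,
    Gsys_dpow_apply_of_emod_add_le x r (by omega)]
  refine Prod.ext ?_ (map_zero _)
  change _ = 0
  simp only [ZSys.dpow_cast, ZSys.cast_cast, ZSys.d_cast, ZSys.d_dpow_apply,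
    ZSys.dpow_dpow_apply, ZSys.cast_eq_zero_iff]
  rw [show k + 1 + r = n + 2 by omega]
  exact DFunLike.congr_fun (hC _) a

theorem Gsys_dpow_apply_eq_zero_of_emod_eq_add_two (hC : IsNComplex (n + 2) C)
    (hX : IsNComplex 2 Xc) {i : ℤ} (hi : i % ((n : ℤ) + 3) = n + 2)
    (a : C.X (i - i / ((n : ℤ) + 3)))
    (b : Xc.X (if i % ((n : ℤ) + 3) = n + 2 then 2 * (i / ((n : ℤ) + 3)) + 1
      else 2 * (i / ((n : ℤ) + 3)))) :
    (Gsys R n C Xc x).dpow (n + 3) i (a, b) = 0 := by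
  have hi₁ : (i + 1) % ((n : ℤ) + 3) = 0 := mod_succ_of_eq (by positivity) (by rw [hi]; ring)
  have hq₁ : (i + 1) / ((n : ℤ) + 3) = i / ((n : ℤ) + 3) + 1 :=
    div_succ_of_eq (by positivity) (by rw [hi]; ring)
  have hlt : (i + 1) % ((n : ℤ) + 3) + ((n + 1 : ℕ) : ℤ) < (n : ℤ) + 3 := by
    rw [hi₁]; omega
  have hi₂ : (i + 1 + ((n + 1 : ℕ) : ℤ)) % ((n : ℤ) + 3) = n + 1 := by
    rw [emod_add_of_emod_add_lt (by positivity) (by positivity) hlt, hi₁]; omega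
  have hq₂ : (i + 1 + ((n + 1 : ℕ) : ℤ)) / ((n : ℤ) + 3) = i / ((n : ℤ) + 3) + 1 := by
    rw [ediv_add_of_emod_add_lt (by positivity) (by positivity) hlt, hq₁]
  erw [ZSys.dpow_succ_apply_eq_zero_iff, Gsys_d_apply_of_emod_eq_add_two x _ rfl hi,
    ZSys.dpow_succ_apply', ZSys.cast_eq_zero_iff, Gsys_dpow_apply_of_emod_add_le x (n + 1)
      (by rw [hi₁]; omega), Gsys_d_apply_of_emod_eq_add_one x _ hq₂ hi₂]
  apply Prod.ext
  · change _ = 0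
    simp only [map_neg, neg_neg, ZSys.cast_cast, ZSys.dpow_cast, ZSys.d_cast, ZSys.d_dpow_apply,
      ZSys.cast_eq_zero_iff]
    exact DFunLike.congr_fun (hC _) a
  · change _ = 0
    simp only [map_add, map_neg, ZSys.cast_cast, ZSys.cast_rfl, ZSys.dpow_cast, ZSys.d_cast,
      x.d_xe_apply, ZSys.d_d_apply_of_isNComplex_two hX, map_zero, add_zero]
    abel

end Gsys

/-- for every staircase chain map `x` from an `(n+2)`-complex `C` to a
2-complex `X` of `R`-modules, the family `G_n(C, x)` is an `(n+3)`-complex. -/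
theorem Gsys_isNComplex (R : Type) [Ring R] (n : ℕ) (C Xc : ZSys R)
    (hC : IsNComplex (n + 2) C) (hX : IsNComplex 2 Xc) (x : Staircase R n C Xc) :
    IsNComplex (n + 3) (Gsys R n C Xc x) := by
  intro i
  ext ⟨a, b⟩
  have hlt := Int.emod_lt_of_pos i (by positivity : (0 : ℤ) < n + 3)
  rcases le_or_gt (i % ((n : ℤ) + 3)) (n + 1) with hi | hi
  · exact Gsys_dpow_apply_eq_zero_of_emod_le x hC hX hi a b
  · exact Gsys_dpow_apply_eq_zero_of_emod_eq_add_two x hC hX (by omega) a b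
end

section
/- Let R be a ring and x : C → X a chain map of cochain complexes of R-modules. Deleting from the 3-complex Y(x) all objects in degrees divisible by 3 and composing the two adjacent differentials across each deleted degree yields the mapping cone of x: for every k ∈ ℤ one has D^{3k+3} ∘ D^{3k+2} = [[−d, 0], [x, d]] : C^{2k+2} ⊕ X^{2k+1} → C^{2k+3} ⊕ X^{2k+2}, so the resulting ℤ-indexed family has degree-m object C^{m+1} ⊕ X^m with differential [[−d, 0], [x, d]] in every degree, and this differential squares to zero. -/
variable {R : Type} [Ring R]

/-- The family `Y(x)` associated with a chain map `x : C → X` of cochain complexes: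
`Y^{3k} = C^{2k} ⊕ X^{2k}`, `Y^{3k+1} = C^{2k+1} ⊕ X^{2k}`, `Y^{3k+2} = C^{2k+2} ⊕ X^{2k+1}`,
with differentials `[[d,0],[0,1]]`, `[[−d,0],[x,d]]` and `[[−1,0],[x,d]]` respectively. -/
def Ysys (C Xc : ZSys R) (x : ∀ i : ℤ, C.X i →ₗ[R] Xc.X i) : ZSys R where
  X i := C.X (i - i / 3) × Xc.X ((2 * i) / 3)
  gr i := by infer_instance
  mo i := by infer_instance
  d i :=
    if h0 : i % 3 = 0 then
      -- `[[d, 0], [0, 1]] : C^{2k} ⊕ X^{2k} → C^{2k+1} ⊕ X^{2k}`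
      LinearMap.prod
        (C.cast (show i - i / 3 + 1 = (i + 1) - (i + 1) / 3 by omega) ∘ₗ C.d (i - i / 3)
          ∘ₗ LinearMap.fst R (C.X (i - i / 3)) (Xc.X ((2 * i) / 3)))
        (Xc.cast (show (2 * i) / 3 = (2 * (i + 1)) / 3 by omega)
          ∘ₗ LinearMap.snd R (C.X (i - i / 3)) (Xc.X ((2 * i) / 3)))
    else if h1 : i % 3 = 1 then
      -- `[[−d, 0], [x, d]] : C^{2k+1} ⊕ X^{2k} → C^{2k+2} ⊕ X^{2k+1}`
      LinearMap.prod
        (-(C.cast (show i - i / 3 + 1 = (i + 1) - (i + 1) / 3 by omega) ∘ₗ C.d (i - i / 3)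
          ∘ₗ LinearMap.fst R (C.X (i - i / 3)) (Xc.X ((2 * i) / 3))))
        (Xc.cast (show i - i / 3 = (2 * (i + 1)) / 3 by omega) ∘ₗ x (i - i / 3)
            ∘ₗ LinearMap.fst R (C.X (i - i / 3)) (Xc.X ((2 * i) / 3))
          + Xc.cast (show (2 * i) / 3 + 1 = (2 * (i + 1)) / 3 by omega) ∘ₗ Xc.d ((2 * i) / 3)
            ∘ₗ LinearMap.snd R (C.X (i - i / 3)) (Xc.X ((2 * i) / 3)))
    else
      -- `[[−1, 0], [x, d]] : C^{2k+2} ⊕ X^{2k+1} → C^{2k+2} ⊕ X^{2k+2}`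
      LinearMap.prod
        (-(C.cast (show i - i / 3 = (i + 1) - (i + 1) / 3 by omega)
          ∘ₗ LinearMap.fst R (C.X (i - i / 3)) (Xc.X ((2 * i) / 3))))
        (Xc.cast (show i - i / 3 = (2 * (i + 1)) / 3 by omega) ∘ₗ x (i - i / 3)
            ∘ₗ LinearMap.fst R (C.X (i - i / 3)) (Xc.X ((2 * i) / 3))
          + Xc.cast (show (2 * i) / 3 + 1 = (2 * (i + 1)) / 3 by omega) ∘ₗ Xc.d ((2 * i) / 3)
            ∘ₗ LinearMap.snd R (C.X (i - i / 3)) (Xc.X ((2 * i) / 3)))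

/-- Transport a pair along equalities of degrees. -/
def pcast (C Xc : ZSys R) {a a' b b' : ℤ} (h1 : a = a') (h2 : b = b') :
    (C.X a × Xc.X b) →ₗ[R] (C.X a' × Xc.X b') :=
  (C.cast h1).prodMap (Xc.cast h2)

/-- The mapping-cone differential `[[−d, 0], [x, d]] : C^{m+1} ⊕ X^m → C^{m+2} ⊕ X^{m+1}`
associated with a chain map `x : C → X`. -/
def ConeD (C Xc : ZSys R) (x : ∀ i : ℤ, C.X i →ₗ[R] Xc.X i) (m : ℤ) :
    (C.X (m + 1) × Xc.X m) →ₗ[R] (C.X (m + 2) × Xc.X (m + 1)) :=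
  LinearMap.prod
    (-(C.cast (show m + 1 + 1 = m + 2 by ring) ∘ₗ C.d (m + 1)
      ∘ₗ LinearMap.fst R (C.X (m + 1)) (Xc.X m)))
    (x (m + 1) ∘ₗ LinearMap.fst R (C.X (m + 1)) (Xc.X m)
      + Xc.d m ∘ₗ LinearMap.snd R (C.X (m + 1)) (Xc.X m))

/-! Across the deleted degree `3k + 3` the composite is `[[d, 0], [0, 1]] ∘ [[−1, 0], [x, d]]`,
which is the cone differential `[[−d, 0], [x, d]]` once the degrees are renamed. That it
squares to zero is `d ∘ d = 0` on the diagonal and `−x ∘ d + d ∘ x = 0` off it. -/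

namespace ZSys

@[simp] lemma cast_rfl_s10 (W : ZSys R) {i : ℤ} (h : i = i) : W.cast h = LinearMap.id := rfl

@[simp] lemma cast_cast_apply (W : ZSys R) {i j l : ℤ} (h₁ : i = j) (h₂ : j = l) (v : W.X i) :
    W.cast h₂ (W.cast h₁ v) = W.cast (h₁.trans h₂) v := by
  subst h₁ h₂; rfl

@[simp] lemma d_cast_apply (W : ZSys R) {i j : ℤ} (h : i = j) (v : W.X i) :
    W.d j (W.cast h v) = W.cast (congrArg (· + 1) h) (W.d i v) := by
  subst h; rfl

lemma cast_apply_eq_zero_iff (W : ZSys R) {i j : ℤ} (h : i = j) (v : W.X i) :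
    W.cast h v = 0 ↔ v = 0 := by
  subst h; rfl

end ZSys

section

variable {C Xc : ZSys R}

lemma IsNComplex.d_d_apply (hC : IsNComplex 2 C) (i : ℤ) (v : C.X i) :
    C.d (i + 1) (C.d i v) = 0 := by
  simpa [ZSys.dpow, ZSys.cast_apply_eq_zero_iff] using LinearMap.congr_fun (hC i) v

@[simp] lemma apply_cast_apply (f : ∀ i : ℤ, C.X i →ₗ[R] Xc.X i) {i j : ℤ} (h : i = j)
    (v : C.X i) : f j (C.cast h v) = Xc.cast h (f i v) := by
  subst h; rfl

lemma IsChainMap.d_apply {x : ∀ i : ℤ, C.X i →ₗ[R] Xc.X i} (hx : IsChainMap C Xc x) (i : ℤ)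
    (v : C.X i) : Xc.d i (x i v) = x (i + 1) (C.d i v) :=
  LinearMap.congr_fun (hx i) v

@[simp] lemma pcast_apply {a a' b b' : ℤ} (h₁ : a = a') (h₂ : b = b') (v : C.X a × Xc.X b) :
    pcast C Xc h₁ h₂ v = (C.cast h₁ v.1, Xc.cast h₂ v.2) := rfl

variable (x : ∀ i : ℤ, C.X i →ₗ[R] Xc.X i)

@[simp] lemma ConeD_apply (m : ℤ) (v : C.X (m + 1) × Xc.X m) :
    ConeD C Xc x m v = (-C.cast (by ring) (C.d (m + 1) v.1), x (m + 1) v.1 + Xc.d m v.2) := rfl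

lemma Ysys_cast_apply {i j : ℤ} (h : i = j) (v : C.X (i - i / 3) × Xc.X (2 * i / 3)) :
    (Ysys C Xc x).cast h v = (C.cast (by rw [h]) v.1, Xc.cast (by rw [h]) v.2) := by
  subst h; rfl

lemma Ysys_d_apply_of_emod_eq_zero {i : ℤ} (hi : i % 3 = 0)
    (v : C.X (i - i / 3) × Xc.X (2 * i / 3)) :
    (Ysys C Xc x).d i v = (C.cast (by lia) (C.d (i - i / 3) v.1), Xc.cast (by lia) v.2) := by
  simp only [Ysys, hi]; rfl

lemma Ysys_d_apply_of_emod_eq_two {i : ℤ} (hi : i % 3 = 2)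
    (v : C.X (i - i / 3) × Xc.X (2 * i / 3)) :
    (Ysys C Xc x).d i v = (-C.cast (by lia) v.1,
      Xc.cast (by lia) (x (i - i / 3) v.1) + Xc.cast (by lia) (Xc.d (2 * i / 3) v.2)) := by
  simp only [Ysys, hi]; rfl

theorem Ysys_d_comp_d_eq_ConeD (k : ℤ) :
    pcast C Xc (by lia) (by lia) ∘ₗ
        (Ysys C Xc x).d (3 * k + 3) ∘ₗ
        (Ysys C Xc x).cast (show 3 * k + 2 + 1 = 3 * k + 3 by ring) ∘ₗ
        (Ysys C Xc x).d (3 * k + 2) ∘ₗ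
        pcast C Xc (by lia) (by lia)
      = ConeD C Xc x (2 * k + 1) := by
  refine LinearMap.ext fun v => ?_
  -- `LinearMap.comp_apply` does not fire: the objects of `Ysys` are products only up to unfolding
  change pcast C Xc _ _ ((Ysys C Xc x).d (3 * k + 3) ((Ysys C Xc x).cast _
    ((Ysys C Xc x).d (3 * k + 2) (pcast C Xc _ _ v)))) = _
  simp only [Ysys_d_apply_of_emod_eq_two x (i := 3 * k + 2) (by lia), Ysys_cast_apply,
    Ysys_d_apply_of_emod_eq_zero x (i := 3 * k + 3) (by lia)]
  simp

theorem ConeD_comp_ConeD_eq_zero (hC : IsNComplex 2 C) (hX : IsNComplex 2 Xc) (hx : IsChainMap C Xc x)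
    (m : ℤ) : ConeD C Xc x (m + 1) ∘ₗ pcast C Xc (by ring) rfl ∘ₗ ConeD C Xc x m = 0 := by
  ext v <;> simp [hC.d_d_apply, hX.d_d_apply, hx.d_apply]

end

/-- deleting from the 3-complex `Y(x)` the objects in degrees divisible
by 3 and composing the two adjacent differentials across each deleted degree yields the
mapping cone of `x`: `D^{3k+3} ∘ D^{3k+2} = [[−d, 0], [x, d]]`, so the resulting family
has degree-`m` object `C^{m+1} ⊕ X^m` with differential `[[−d, 0], [x, d]]`, and this
differential squares to zero. -/
theorem Ysys_deletion_gives_mappingCone (R : Type) [Ring R] (C Xc : ZSys R)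
    (hC : IsNComplex 2 C) (hX : IsNComplex 2 Xc)
    (x : ∀ i : ℤ, C.X i →ₗ[R] Xc.X i) (hx : IsChainMap C Xc x) :
    (∀ k : ℤ,
      pcast C Xc (by omega) (by omega) ∘ₗ
          (Ysys C Xc x).d (3 * k + 3) ∘ₗ
          (Ysys C Xc x).cast (show 3 * k + 2 + 1 = 3 * k + 3 by ring) ∘ₗ
          (Ysys C Xc x).d (3 * k + 2) ∘ₗ
          pcast C Xc (by omega) (by omega)
        = ConeD C Xc x (2 * k + 1)) ∧
    (∀ m : ℤ, ConeD C Xc x (m + 1) ∘ₗ pcast C Xc (by ring) rfl ∘ₗ ConeD C Xc x m = 0) := by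
  exact ⟨Ysys_d_comp_d_eq_ConeD x, ConeD_comp_ConeD_eq_zero x hC hX hx⟩
end
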